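/- arXiv:1602.01328 — 3 statements merged into one kernel-verified Lean document; each statement's English description precedes it below -/
import Mathlib

section
/- (Cycle lemma identity) Let (W_i)_{i≥0} be a random walk on ℤ with i.i.d. increments, started at W_0 = 1. Then for every k > n ≥ 0, P(W_i > 0 for 1 ≤ i < k, and W_k = 0) = (1/k) · P(W_k = 0). -/
/-!
Rotating an increment vector `x ∈ ℤᵏ` of total sum `-1` cyclically to start at position `r`
yields a path whose partial sums stay `≥ 0` before time `k` exactly when `r` is the first
minimiser of the partial sums of `x` on `0, …, k - 1`. Hence exactly one of the `k` rotations
is a first-passage path. The law of i.i.d. increments is invariant under rotations, so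
`P(W_k = 0) = k · P(first passage to 0 at time k)`.
-/

open MeasureTheory ProbabilityTheory Finset

def IsFirstMinimizer {ι α : Type*} [LT ι] [Preorder α] (f : ι → α) (r : ι) : Prop :=
  (∀ i, f r ≤ f i) ∧ ∀ i < r, f r < f i

theorem IsFirstMinimizer.not_lt {ι α : Type*} [LT ι] [Preorder α] {f : ι → α} {a b : ι}
    (ha : IsFirstMinimizer f a) (hb : IsFirstMinimizer f b) : ¬a < b :=
  fun hab => (hb.2 a hab).not_ge (ha.1 b)

theorem existsUnique_isFirstMinimizer {ι α : Type*} [Finite ι] [Nonempty ι] [LinearOrder ι]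
    [LinearOrder α] (f : ι → α) : ∃! r, IsFirstMinimizer f r := by
  obtain ⟨r, hr⟩ := Finite.exists_min fun i => toLex (f i, i)
  have hr : IsFirstMinimizer f r := by
    refine ⟨fun i => ?_, fun i hi => ?_⟩ <;> rcases Prod.Lex.le_iff.mp (hr i) with h | h
    exacts [h.le, h.1.le, h, absurd h.2 (not_le.mpr hi)]
  exact ⟨r, hr, fun r' hr' =>
    le_antisymm (not_lt.mp (hr.not_lt hr')) (not_lt.mp (hr'.not_lt hr))⟩

section CyclicPartialSum

open Fin.NatCast

variable {k : ℕ} [NeZero k] {α : Type*}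

def cyclicPartialSum [AddCommMonoid α] (x : Fin k → α) (j : ℕ) : α :=
  ∑ i ∈ range j, x i

section AddCommMonoid

variable [AddCommMonoid α]

theorem cyclicPartialSum_period (x : Fin k → α) : cyclicPartialSum x k = ∑ i, x i := by
  simp only [cyclicPartialSum, ← Fin.sum_univ_eq_sum_range, Fin.cast_val_eq_self]

theorem cyclicPartialSum_add (x : Fin k → α) (m j : ℕ) :
    cyclicPartialSum x (m + j) =
      cyclicPartialSum x m + cyclicPartialSum (x ∘ Equiv.addRight (m : Fin k)) j := by
  simp only [cyclicPartialSum, sum_range_add, Nat.cast_add, Function.comp_apply,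
    Equiv.coe_addRight, add_comm]

theorem cyclicPartialSum_add_period (x : Fin k → α) (j : ℕ) :
    cyclicPartialSum x (j + k) = cyclicPartialSum x j + ∑ i, x i := by
  rw [cyclicPartialSum_add, cyclicPartialSum_period]
  exact congrArg _ (Equiv.sum_comp (Equiv.addRight _) x)

theorem cyclicPartialSum_eq_sum_range (f : ℕ → α) {j : ℕ} (hj : j ≤ k) :
    cyclicPartialSum (fun i : Fin k => f i) j = ∑ i ∈ range j, f i :=
  sum_congr rfl fun i hi => by simp only [Fin.val_cast_of_lt ((mem_range.mp hi).trans_le hj)]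

end AddCommMonoid

theorem cyclicPartialSum_rotate [AddCommGroup α] (x : Fin k → α) (r : Fin k) (j : ℕ) :
    cyclicPartialSum (x ∘ Equiv.addRight r) j =
      cyclicPartialSum x (r + j) - cyclicPartialSum x r := by
  rw [cyclicPartialSum_add, Fin.cast_val_eq_self, add_sub_cancel_left]

-- `x` are the increments of a walk started at `1` that stays positive before time `k`
-- and hits `0` at time `k`.
def IsFirstPassage (x : Fin k → ℤ) : Prop :=
  (∀ j < k, 0 ≤ cyclicPartialSum x j) ∧ cyclicPartialSum x k = -1

theorem isFirstPassage_iff {x : Fin k → ℤ} {w : ℕ → ℤ}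
    (hw : ∀ j ≤ k, w j = 1 + cyclicPartialSum x j) :
    IsFirstPassage x ↔ (∀ i, 1 ≤ i → i < k → 0 < w i) ∧ w k = 0 := by
  refine and_congr ⟨fun h i _ hik => ?_, fun h j hj => ?_⟩ (by rw [hw k le_rfl]; omega)
  · linarith [h i hik, hw i hik.le]
  · rcases j with _ | j
    · simp [cyclicPartialSum]
    · linarith [h (j + 1) (by omega) hj, hw (j + 1) hj.le]

theorem isFirstPassage_rotate_iff (x : Fin k → ℤ) (r : Fin k) :
    IsFirstPassage (x ∘ Equiv.addRight r) ↔
      ∑ i, x i = -1 ∧ IsFirstMinimizer (fun i : Fin k => cyclicPartialSum x i) r := by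
  have hper := cyclicPartialSum_add_period x
  have htotal : cyclicPartialSum (x ∘ Equiv.addRight r) k = ∑ i, x i := by
    rw [cyclicPartialSum_rotate, hper, add_sub_cancel_left]
  rw [IsFirstPassage, htotal]
  simp only [IsFirstMinimizer, cyclicPartialSum_rotate, sub_nonneg]
  constructor
  · rintro ⟨hnonneg, hsum⟩
    have hlt : ∀ i < r, cyclicPartialSum x r < cyclicPartialSum x i := fun i hi => by
      have := hnonneg (i + k - r) (by omega)
      rw [show (r : ℕ) + (i + k - r) = i + k by omega, hper, hsum] at this
      omega
    refine ⟨hsum, fun i => ?_, hlt⟩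
    rcases lt_or_ge i r with hi | hi
    · exact (hlt i hi).le
    · simpa [show (r : ℕ) + (i - r) = i by omega] using hnonneg (i - r) (by omega)
  · rintro ⟨hsum, hmin, hlt⟩
    refine ⟨fun j hj => ?_, hsum⟩
    rcases lt_or_ge ((r : ℕ) + j) k with h | h
    · exact hmin ⟨r + j, h⟩
    · have := hlt ⟨r + j - k, by omega⟩ (Fin.mk_lt_of_lt_val (by omega))
      simp only at this
      rw [show (r : ℕ) + j = (r + j - k) + k by omega, hper, hsum]
      omega

theorem existsUnique_isFirstPassage_rotate {x : Fin k → ℤ} (hx : ∑ i, x i = -1) :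
    ∃! r : Fin k, IsFirstPassage (x ∘ Equiv.addRight r) := by
  simpa only [isFirstPassage_rotate_iff, hx, true_and] using existsUnique_isFirstMinimizer _

theorem measure_sum_eq_neg_one_eq_mul_isFirstPassage {ν : Measure (Fin k → ℤ)}
    (hν : ∀ r : Fin k, MeasurePreserving (· ∘ Equiv.addRight r) ν ν) :
    ν {x | ∑ i, x i = -1} = k * ν {x | IsFirstPassage x} := by
  set A : Fin k → Set (Fin k → ℤ) := fun r =>
    (· ∘ Equiv.addRight r) ⁻¹' {x | IsFirstPassage x}
  have hcover : {x : Fin k → ℤ | ∑ i, x i = -1} = ⋃ r, A r := by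
    ext x
    simp only [A, Set.mem_ofPred_eq, Set.mem_iUnion, Set.mem_preimage]
    exact ⟨fun hx => (existsUnique_isFirstPassage_rotate hx).exists,
      fun ⟨r, hr⟩ => ((isFirstPassage_rotate_iff x r).1 hr).1⟩
  have hdisj : Pairwise (Function.onFun Disjoint A) := fun r r' hne =>
    Set.disjoint_left.mpr fun x hr hr' => hne <|
      (existsUnique_isFirstPassage_rotate ((isFirstPassage_rotate_iff x r).1 hr).1).unique hr hr'
  rw [hcover, measure_iUnion hdisj fun _ => .of_discrete, tsum_fintype]
  simp only [A, (hν _).measure_preimage MeasurableSet.of_discrete.nullMeasurableSet, sum_const,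
    card_univ, Fintype.card_fin, nsmul_eq_mul]

end CyclicPartialSum

theorem MeasureTheory.measurePreserving_pi_comp_equiv {ι β : Type*} [Fintype ι]
    [MeasurableSpace β] (μ : Measure β) [SigmaFinite μ] (e : ι ≃ ι) :
    MeasurePreserving (· ∘ e) (Measure.pi fun _ : ι => μ) (Measure.pi fun _ => μ) := by
  convert measurePreserving_piCongrLeft (fun _ => μ) e.symm
  ext x
  simp [MeasurableEquiv.piCongrLeft, Equiv.piCongrLeft]

theorem ProbabilityTheory.iIndepFun.map_comp_eq_pi {Ω ι κ β : Type*} [MeasurableSpace Ω]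
    [MeasurableSpace β] [Fintype κ] {P : Measure Ω} {X : ι → Ω → β} {i₀ : ι}
    (hindep : iIndepFun X P) (hident : ∀ i, IdentDistrib (X i) (X i₀) P P) {g : κ → ι}
    (hg : Function.Injective g) :
    P.map (fun ω j => X (g j) ω) = Measure.pi fun _ => P.map (X i₀) := by
  rw [(hindep.precomp hg).map_fun_eq_pi_map fun j => (hident (g j)).aemeasurable_fst]
  simp only [(hident _).map_eq]

theorem cycle_lemma_general {Ω : Type*} [MeasurableSpace Ω]
    (P : Measure Ω) [IsProbabilityMeasure P]
    (X : ℕ → Ω → ℤ)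
    (hindep : iIndepFun X P)
    (hident : ∀ i, IdentDistrib (X i) (X 0) P P)
    (W : ℕ → Ω → ℤ) (hW : ∀ n ω, W n ω = 1 + ∑ i ∈ Finset.range n, X i ω)
    (n k : ℕ) :
    (P {ω | (∀ i, 1 ≤ i → i < k → 0 < W i ω) ∧ W k ω = 0}).toReal
      = (1 / (k : ℝ)) * (P {ω | W k ω = 0}).toReal := by
  rcases Nat.eq_zero_or_pos k with rfl | hk
  · simp [hW]
  have : NeZero k := ⟨hk.ne'⟩
  set V : Ω → Fin k → ℤ := fun ω i => X i ω
  have hwalk : ∀ ω, ∀ j ≤ k, W j ω = 1 + cyclicPartialSum (V ω) j := fun ω j hj => by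
    rw [hW, cyclicPartialSum_eq_sum_range (X · ω) hj]
  have hfirst : {ω | (∀ i, 1 ≤ i → i < k → 0 < W i ω) ∧ W k ω = 0} =
      V ⁻¹' {x | IsFirstPassage x} := by
    ext ω
    exact (isFirstPassage_iff (hwalk ω)).symm
  have hzero : {ω | W k ω = 0} = V ⁻¹' {x | ∑ i, x i = -1} := by
    ext ω
    simp only [Set.mem_ofPred_eq, Set.mem_preimage, hwalk ω k le_rfl, cyclicPartialSum_period]
    omega
  have hV : AEMeasurable V P := aemeasurable_pi_lambda _ fun i => (hident i).aemeasurable_fst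
  rw [hfirst, hzero, ← Measure.map_apply_of_aemeasurable hV .of_discrete,
    ← Measure.map_apply_of_aemeasurable hV .of_discrete,
    hindep.map_comp_eq_pi hident Fin.val_injective,
    measure_sum_eq_neg_one_eq_mul_isFirstPassage fun r => measurePreserving_pi_comp_equiv _ _,
    ENNReal.toReal_mul, ENNReal.toReal_natCast, one_div, inv_mul_cancel_left₀ (by positivity)]

/-- Cycle lemma identity: for a random walk `W` on `ℤ` started at `1` with i.i.d.
increments, for every `k > n ≥ 0`,
`P(W_i > 0 for 1 ≤ i < k, W_k = 0) = (1/k)·P(W_k = 0)`. -/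
theorem cycle_lemma {Ω : Type*} [MeasurableSpace Ω]
    (P : Measure Ω) [IsProbabilityMeasure P]
    (X : ℕ → Ω → ℤ) (hXmeas : ∀ i, Measurable (X i))
    (hindep : iIndepFun X P)
    (hident : ∀ i, IdentDistrib (X i) (X 0) P P)
    (W : ℕ → Ω → ℤ) (hW : ∀ n ω, W n ω = 1 + ∑ i ∈ Finset.range n, X i ω)
    (n k : ℕ) (hnk : n < k) :
    (P {ω | (∀ i, 1 ≤ i → i < k → 0 < W i ω) ∧ W k ω = 0}).toReal
      = (1 / (k : ℝ)) * (P {ω | W k ω = 0}).toReal :=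
  cycle_lemma_general P X hindep hident W hW n k
end

section
/- Let a ∈ (3/2, 5/2), κ = 1/(4a−2), c = −√π/(2Γ(3/2−a)), and define ν(k) = c·Γ(3/2−a+k)/Γ(3/2+k) for k ∈ ℤ\{0}, ν(0) = 0. Then ν(k) ≥ 0 for all k and Σ_{k∈ℤ} ν(k) = 1, i.e. ν is a probability measure on ℤ. -/
/-!
Write `b = 3/2 - a ∈ (-1, 0)`. For `n ≥ 0` the terms are `ν(n+1) = c·h n / (n + 3/2)` with
`h n = Γ(n+1+b) / Γ(n+3/2)`, and `ν(-(n+1)) = c·h n / (n + 1 - b)` with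
`h n = -Γ(b-n) / Γ(1/2-n)`. In both cases `Γ(s+1) = s·Γ(s)` gives `h (n+1) = (n+x)/(n+y) · h n`
with `0 ≤ x < y`, so `h ≥ 0` and `h n / (n+y) = (h n - h (n+1)) / (y-x)` telescopes; `h n → 0`
because `∑ 1/(n+y)` diverges. The two sums are `h 0 / (y-x)`, and together they give
`-2Γ(b)/√π = 1/c`.
-/

open Filter Topology Real

section RatioSequence

variable {h ε : ℕ → ℝ}

theorem nonneg_of_succ_eq_mul {ρ : ℕ → ℝ} (h0 : 0 ≤ h 0) (hρ : ∀ n, 0 ≤ ρ n)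
    (hrec : ∀ n, h (n + 1) = ρ n * h n) (n : ℕ) : 0 ≤ h n := by
  induction n with
  | zero => exact h0
  | succ n ih => rw [hrec]; exact mul_nonneg (hρ n) ih

theorem tendsto_zero_of_succ_eq_one_sub_mul (h0 : 0 ≤ h 0) (hε : ∀ n, 0 ≤ ε n)
    (hε₁ : ∀ n, ε n ≤ 1) (hrec : ∀ n, h (n + 1) = (1 - ε n) * h n) (hdiv : ¬ Summable ε) :
    Tendsto h atTop (𝓝 0) := by
  have hpos : ∀ n, 0 ≤ h n := nonneg_of_succ_eq_mul h0 (fun n => by linarith [hε₁ n]) hrec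
  have hdrop : ∀ n, h n - h (n + 1) = ε n * h n := fun n => by rw [hrec]; ring
  have hanti : Antitone h := antitone_nat_of_succ_le fun n => by
    nlinarith [hdrop n, hε n, hpos n]
  have hbdd : BddBelow (Set.range h) := ⟨0, by rintro _ ⟨n, rfl⟩; exact hpos n⟩
  have hlim := tendsto_atTop_ciInf hanti hbdd
  set L := ⨅ n, h n
  suffices L = 0 by rwa [this] at hlim
  by_contra hL
  have hLpos : 0 < L := lt_of_le_of_ne (le_ciInf hpos) (Ne.symm hL)
  refine hdiv ((summable_mul_right_iff hLpos.ne').mp ?_)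
  refine summable_of_sum_range_le (c := h 0) (fun n => mul_nonneg (hε n) hLpos.le) fun N => ?_
  calc ∑ i ∈ Finset.range N, ε i * L ≤ ∑ i ∈ Finset.range N, (h i - h (i + 1)) :=
        Finset.sum_le_sum fun i _ => hdrop i ▸ mul_le_mul_of_nonneg_left (ciInf_le hbdd i) (hε i)
    _ = h 0 - h N := Finset.sum_range_sub' h N
    _ ≤ h 0 := by linarith [hpos N]

theorem hasSum_mul_of_succ_eq_one_sub_mul (h0 : 0 ≤ h 0) (hε : ∀ n, 0 ≤ ε n)
    (hε₁ : ∀ n, ε n ≤ 1) (hrec : ∀ n, h (n + 1) = (1 - ε n) * h n) (hdiv : ¬ Summable ε) :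
    HasSum (fun n => ε n * h n) (h 0) := by
  have hpos : ∀ n, 0 ≤ h n := nonneg_of_succ_eq_mul h0 (fun n => by linarith [hε₁ n]) hrec
  have hdrop : ∀ n, ε n * h n = h n - h (n + 1) := fun n => by rw [hrec]; ring
  rw [hasSum_iff_tendsto_nat_of_nonneg (fun n => mul_nonneg (hε n) (hpos n))]
  simp_rw [hdrop, Finset.sum_range_sub']
  simpa using (tendsto_zero_of_succ_eq_one_sub_mul h0 hε hε₁ hrec hdiv).const_sub (h 0)

end RatioSequence

theorem not_summable_div_nat_add {C r : ℝ} (hC : C ≠ 0) (hr : 0 < r) :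
    ¬ Summable (fun n : ℕ => C / (n + r)) := by
  have h := (Real.summable_one_div_nat_add_rpow r 1).not.mpr (lt_irrefl 1)
  contrapose! h
  refine ((summable_mul_left_iff (inv_ne_zero hC)).mpr h).congr fun n => ?_
  rw [abs_of_pos (by positivity), Real.rpow_one]
  field_simp

theorem hasSum_div_nat_add_of_succ_eq {x y : ℝ} (hx : 0 ≤ x) (hxy : x < y) {h : ℕ → ℝ}
    (h0 : 0 ≤ h 0) (hrec : ∀ n : ℕ, h (n + 1) = (n + x) / (n + y) * h n) :
    HasSum (fun n : ℕ => h n / (n + y)) (h 0 / (y - x)) := by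
  have hy : ∀ n : ℕ, 0 < n + y := fun n => by linarith [n.cast_nonneg (α := ℝ)]
  have hyx : y - x ≠ 0 := sub_ne_zero.mpr hxy.ne'
  have hsum := hasSum_mul_of_succ_eq_one_sub_mul (ε := fun n : ℕ => (y - x) / (n + y)) h0
    (fun n => div_nonneg (by linarith) (hy n).le)
    (fun n => (div_le_one (hy n)).mpr (by linarith [n.cast_nonneg (α := ℝ)]))
    (fun n => by rw [hrec, one_sub_div (hy n).ne']; ring_nf)
    (not_summable_div_nat_add hyx (by linarith))
  have hterm : (fun n : ℕ => (y - x) / (n + y) * h n / (y - x)) = fun n => h n / (n + y) :=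
    funext fun n => by field_simp
  simpa only [hterm] using hsum.div_const (y - x)

namespace Real

theorem Gamma_add_one_div_Gamma_add_one {s t : ℝ} (hs : s ≠ 0) (ht : t ≠ 0) :
    Gamma (s + 1) / Gamma (t + 1) = s / t * (Gamma s / Gamma t) := by
  rw [Gamma_add_one hs, Gamma_add_one ht, mul_div_mul_comm]

theorem Gamma_neg_of_neg_one_lt_of_neg {s : ℝ} (hs : -1 < s) (hs' : s < 0) : Gamma s < 0 := by
  have h := Gamma_pos_of_pos (by linarith : 0 < s + 1)
  rw [Gamma_add_one hs'.ne] at h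
  exact neg_of_mul_pos_right h hs'.le

theorem hasSum_Gamma_div_Gamma_nat_add {b : ℝ} (hb : -1 < b) (hb' : b < 1 / 2) :
    HasSum (fun n : ℕ => Gamma (b + (n + 1)) / Gamma (3 / 2 + (n + 1)))
      (Gamma (b + 1) / Gamma (3 / 2) / (1 / 2 - b)) := by
  have h0 : 0 ≤ Gamma ((0 : ℕ) + (b + 1)) / Gamma ((0 : ℕ) + 3 / 2) := by
    simp only [Nat.cast_zero, zero_add]
    exact div_nonneg (Gamma_pos_of_pos (by linarith)).le (Gamma_pos_of_pos (by norm_num)).le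
  have hrec (n : ℕ) : Gamma ((n + 1 : ℕ) + (b + 1)) / Gamma ((n + 1 : ℕ) + 3 / 2) =
      (n + (b + 1)) / (n + 3 / 2) * (Gamma (n + (b + 1)) / Gamma (n + 3 / 2)) := by
    have hb1 : (n : ℝ) + (b + 1) ≠ 0 := by linarith [n.cast_nonneg (α := ℝ)]
    push_cast
    rw [add_right_comm, add_right_comm _ 1, Gamma_add_one_div_Gamma_add_one hb1 (by positivity)]
  have hsum := hasSum_div_nat_add_of_succ_eq
    (h := fun n : ℕ => Gamma (n + (b + 1)) / Gamma (n + 3 / 2)) (by linarith) (by linarith) h0 hrec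
  convert hsum using 1
  · funext n
    rw [show b + (n + 1) = n + (b + 1) by ring, show (3 / 2 : ℝ) + (n + 1) = n + 3 / 2 + 1 by ring,
      Gamma_add_one (by positivity), div_mul_eq_div_div_swap]
  · simp only [Nat.cast_zero, zero_add]
    ring_nf

section NegativeShift

variable {b : ℝ}

theorem neg_Gamma_sub_div_Gamma_sub_succ (hb : b < 1) (n : ℕ) :
    -Gamma (b - (n + 1 : ℕ)) / Gamma (1 / 2 - (n + 1 : ℕ)) =
      (n + 1 / 2) / (n + (1 - b)) * (-Gamma (b - n) / Gamma (1 / 2 - n)) := by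
  have hs : b - (n + 1) ≠ 0 := by linarith [n.cast_nonneg (α := ℝ)]
  have ht : (1 / 2 : ℝ) - (n + 1) ≠ 0 := by linarith [n.cast_nonneg (α := ℝ)]
  have hcancel : (n + 1 / 2) / (n + (1 - b)) * ((b - (n + 1)) / (1 / 2 - (n + 1))) = 1 := by
    have hs' : (n : ℝ) + (1 - b) ≠ 0 := by linarith
    have ht' : (n : ℝ) + 1 / 2 ≠ 0 := by positivity
    rw [show b - (n + 1) = -(n + (1 - b)) by ring,
      show (1 / 2 : ℝ) - (n + 1) = -(n + 1 / 2) by ring, neg_div_neg_eq]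
    field_simp
  rw [show b - n = b - (n + 1) + 1 by ring, show (1 / 2 : ℝ) - n = 1 / 2 - (n + 1) + 1 by ring,
    neg_div, neg_div, Gamma_add_one_div_Gamma_add_one hs ht, mul_neg, ← mul_assoc, hcancel, one_mul]
  push_cast
  rfl

theorem Gamma_sub_succ_div_Gamma_three_halves_sub_succ (hb : b < 1) (n : ℕ) :
    Gamma (b - (n + 1)) / Gamma (3 / 2 - (n + 1)) =
      -Gamma (b - n) / Gamma (1 / 2 - n) / (n + (1 - b)) := by
  have hs : b - (n + 1) ≠ 0 := by linarith [n.cast_nonneg (α := ℝ)]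
  rw [show b - n = b - (n + 1) + 1 by ring, show (3 / 2 : ℝ) - (n + 1) = 1 / 2 - n by ring,
    Gamma_add_one hs]
  have hs' : (n : ℝ) + (1 - b) ≠ 0 := by linarith
  field_simp
  ring

theorem neg_Gamma_sub_div_nonneg (hb : -1 < b) (hb' : b < 0) (n : ℕ) :
    0 ≤ -Gamma (b - n) / Gamma (1 / 2 - n) := by
  have h0 : 0 ≤ -Gamma (b - (0 : ℕ)) / Gamma (1 / 2 - (0 : ℕ)) := by
    rw [Nat.cast_zero, sub_zero, sub_zero]
    exact div_nonneg (neg_nonneg.mpr (Gamma_neg_of_neg_one_lt_of_neg hb hb').le)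
      (Gamma_pos_of_pos one_half_pos).le
  refine nonneg_of_succ_eq_mul (h := fun n : ℕ => -Gamma (b - n) / Gamma (1 / 2 - n)) h0
    (fun n => div_nonneg (by positivity) ?_) (neg_Gamma_sub_div_Gamma_sub_succ (by linarith)) n
  linarith [n.cast_nonneg (α := ℝ)]

theorem Gamma_sub_div_Gamma_sub_nonneg (hb : -1 < b) (hb' : b < 0) (n : ℕ) :
    0 ≤ Gamma (b - (n + 1)) / Gamma (3 / 2 - (n + 1)) := by
  rw [Gamma_sub_succ_div_Gamma_three_halves_sub_succ (by linarith)]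
  exact div_nonneg (neg_Gamma_sub_div_nonneg hb hb' n) (by linarith [n.cast_nonneg (α := ℝ)])

theorem hasSum_Gamma_div_Gamma_nat_sub (hb : -1 < b) (hb' : b < 0) :
    HasSum (fun n : ℕ => Gamma (b - (n + 1)) / Gamma (3 / 2 - (n + 1)))
      (-Gamma b / Gamma (1 / 2) / (1 / 2 - b)) := by
  have hsum := hasSum_div_nat_add_of_succ_eq
    (h := fun n : ℕ => -Gamma (b - n) / Gamma (1 / 2 - n)) (x := 1 / 2) (y := 1 - b)
    one_half_pos.le (by linarith) (neg_Gamma_sub_div_nonneg hb hb' 0)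
    (neg_Gamma_sub_div_Gamma_sub_succ (by linarith))
  convert hsum using 1
  · exact funext (Gamma_sub_succ_div_Gamma_three_halves_sub_succ (by linarith))
  · simp only [Nat.cast_zero, sub_zero]
    ring_nf

end NegativeShift

theorem Gamma_div_Gamma_int_nonneg {b : ℝ} (hb : -1 < b) (hb' : b < 0) {k : ℤ} (hk : k ≠ 0) :
    0 ≤ Gamma (b + k) / Gamma (3 / 2 + k) := by
  rcases Int.eq_nat_or_neg k with ⟨_ | n, rfl | rfl⟩
  · exact absurd rfl hk
  · exact absurd rfl hk
  · have hn := n.cast_nonneg (α := ℝ)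
    push_cast
    exact div_nonneg (Gamma_pos_of_pos (by linarith)).le (Gamma_pos_of_pos (by linarith)).le
  · push_cast
    simpa only [← sub_eq_add_neg] using Gamma_sub_div_Gamma_sub_nonneg hb hb' n

theorem hasSum_Gamma_div_Gamma_int {b : ℝ} (hb : -1 < b) (hb' : b < 0) :
    HasSum (fun k : ℤ => if k = 0 then 0 else Gamma (b + k) / Gamma (3 / 2 + k))
      (-2 * Gamma b / √π) := by
  set f : ℤ → ℝ := fun k => if k = 0 then 0 else Gamma (b + k) / Gamma (3 / 2 + k)
  have hf_pos (n : ℕ) : f (n + 1 : ℕ) = Gamma (b + (n + 1)) / Gamma (3 / 2 + (n + 1)) := by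
    simp only [f, if_neg (by omega : ((n + 1 : ℕ) : ℤ) ≠ 0)]
    push_cast
    rfl
  have hf_neg (n : ℕ) : f (-((n : ℤ) + 1)) = Gamma (b - (n + 1)) / Gamma (3 / 2 - (n + 1)) := by
    simp only [f, if_neg (by omega : -((n : ℤ) + 1) ≠ 0)]
    push_cast
    simp only [← sub_eq_add_neg]
  have hnat : HasSum (fun n : ℕ => f n) (Gamma (b + 1) / Gamma (3 / 2) / (1 / 2 - b)) := by
    rw [← hasSum_nat_add_iff' 1, Finset.sum_range_one, Nat.cast_zero]
    simpa only [f, if_pos rfl, sub_zero, hf_pos] using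
      hasSum_Gamma_div_Gamma_nat_add hb (by linarith)
  have hneg : HasSum (fun n : ℕ => f (-((n : ℤ) + 1)))
      (-Gamma b / Gamma (1 / 2) / (1 / 2 - b)) := by
    simpa only [hf_neg] using hasSum_Gamma_div_Gamma_nat_sub hb hb'
  convert hnat.of_nat_of_neg_add_one hneg using 1
  have hΓ32 : Gamma (3 / 2) = √π / 2 := by
    rw [show (3 / 2 : ℝ) = 1 / 2 + 1 by norm_num, Gamma_add_one one_half_pos.ne', Gamma_one_half_eq]
    ring
  have hπ : √π ≠ 0 := (sqrt_pos.mpr pi_pos).ne'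
  have hb2 : 1 / 2 - b ≠ 0 := by linarith
  rw [Gamma_add_one hb'.ne, hΓ32, Gamma_one_half_eq, ← add_div, eq_div_iff hb2]
  field_simp
  ring

end Real

theorem special_nu_is_probability_general (a c : ℝ)
    (ha : 3 / 2 < a) (ha' : a < 5 / 2)
    (hc : c = -Real.sqrt Real.pi / (2 * Real.Gamma (3 / 2 - a)))
    (ν : ℤ → ℝ)
    (hν : ∀ k : ℤ, ν k =
      if k = 0 then 0
      else c * Real.Gamma (3 / 2 - a + (k : ℝ)) / Real.Gamma (3 / 2 + (k : ℝ))) :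
    (∀ k : ℤ, 0 ≤ ν k) ∧ ∑' k : ℤ, ν k = 1 := by
  have hb : -1 < 3 / 2 - a := by linarith
  have hb' : 3 / 2 - a < 0 := by linarith
  have hΓ := Real.Gamma_neg_of_neg_one_lt_of_neg hb hb'
  have hc0 : 0 ≤ c := hc ▸ div_nonneg_of_nonpos (by simp) (by linarith)
  have hν_eq : ν = fun k : ℤ => c * if k = 0 then 0 else
      Real.Gamma (3 / 2 - a + (k : ℝ)) / Real.Gamma (3 / 2 + (k : ℝ)) := by
    funext k
    rw [hν]
    split_ifs <;> simp only [mul_zero, mul_div_assoc]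
  refine ⟨fun k => ?_, ?_⟩
  · rw [hν_eq]
    refine mul_nonneg hc0 ?_
    split_ifs with hk
    exacts [le_rfl, Real.Gamma_div_Gamma_int_nonneg hb hb' hk]
  · rw [hν_eq, ((Real.hasSum_Gamma_div_Gamma_int hb hb').mul_left c).tsum_eq, hc]
    have hπ : Real.sqrt Real.pi ≠ 0 := (Real.sqrt_pos.mpr Real.pi_pos).ne'
    generalize Real.Gamma (3 / 2 - a) = G at hΓ ⊢
    field_simp [hΓ.ne]

/-- The special step law of Section 5: for `a ∈ (3/2, 5/2)`, `κ = 1/(4a−2)` and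
`c = −√π/(2Γ(3/2−a))`, the sequence `ν(k) = c·Γ(3/2−a+k)/Γ(3/2+k)` for `k ≠ 0`
(and `ν(0) = 0`) is nonnegative and sums to `1`, i.e. defines a probability
measure on `ℤ`. -/
theorem special_nu_is_probability (a κ c : ℝ)
    (ha : 3 / 2 < a) (ha' : a < 5 / 2)
    (hκ : κ = 1 / (4 * a - 2))
    (hc : c = -Real.sqrt Real.pi / (2 * Real.Gamma (3 / 2 - a)))
    (ν : ℤ → ℝ)
    (hν : ∀ k : ℤ, ν k =
      if k = 0 then 0
      else c * Real.Gamma (3 / 2 - a + (k : ℝ)) / Real.Gamma (3 / 2 + (k : ℝ))) :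
    (∀ k : ℤ, 0 ≤ ν k) ∧ ∑' k : ℤ, ν k = 1 :=
  special_nu_is_probability_general a c ha ha' hc ν hν
end

section
/- Let ν be the measure on ℤ given by ν(k) = c·Γ(3/2−a+k)/Γ(3/2+k)·1_{k≠0} with c = −√π/(2Γ(3/2−a)) and a ∈ (3/2, 5/2). Then the function h↑(ℓ) = 2ℓ·4^{−ℓ}·C(2ℓ,ℓ) (extended by 0 to ℤ_{≤0}) is ν-harmonic on ℤ_{>0}: for every ℓ > 0, Σ_{k∈ℤ} h↑(ℓ+k)·ν(k) = h↑(ℓ). -/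
/-- `h↑(ℓ) = 2ℓ · 4^{-ℓ} · C(2ℓ,ℓ)`, extended by `0` on nonpositive integers. -/
noncomputable def hupZ (ℓ : ℤ) : ℝ :=
  if 0 < ℓ then 2 * ℓ * ((4:ℝ) ^ ℓ.toNat)⁻¹ * (Nat.choose (2 * ℓ.toNat) ℓ.toNat) else 0

/-!
Write `ℓ = L + 1` and substitute `m = ℓ + k`. Since `h↑(n + 1) = 2 Γ(n + 3/2) / (√π n!)`, the sum
becomes `2c/√π` times the series `Σₙ Γ(n + α) Γ(n + β) / (n! Γ(n + γ))` with `α = 3/2`,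
`β = 3/2 - a - L`, `γ = 3/2 - L`, with its term `n = L` (that is, `k = 0`) removed.
Up to the factor `Γ(α) Γ(β) / Γ(γ)` this is the Gauss series `₂F₁(α, β; γ; 1)`, which vanishes
because `γ - α = -L` is a nonpositive integer (in Gauss's formula, `1 / Γ(γ - α) = 0`).
We prove the vanishing directly: telescoping gives the contiguous relation
`(α - γ) F(α, β + 1, γ + 1) + β F(α, β, γ) = 0`, which lowers `γ - α` by one at each step down to
`γ = α`, where it reads `β F = 0`. The removed term is exactly `h↑(ℓ)`.
-/

open Real Filter Topology Asymptotics Nat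

theorem forall_ne_neg_natCast {x : ℝ} (hx : ∀ m : ℤ, x ≠ m) : ∀ m : ℕ, x ≠ -m := fun m => by
  exact_mod_cast hx (-m)

theorem ne_intCast_of_lt_of_lt {x : ℝ} {k : ℤ} (h₁ : k < x) (h₂ : x < k + 1) (m : ℤ) :
    x ≠ m := by
  rintro rfl
  have : k < m := by exact_mod_cast h₁
  have : m < k + 1 := by exact_mod_cast h₂
  omega

namespace Real

theorem Gamma_add_nat_eq_mul_prod {x : ℝ} (hx : ∀ m : ℕ, x ≠ -m) (n : ℕ) :
    Gamma (x + n) = Gamma x * ∏ j ∈ Finset.range n, (x + j) := by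
  induction n with
  | zero => simp
  | succ n ih =>
    have hxn : x + n ≠ 0 := fun h => hx n (by linarith)
    rw [Finset.prod_range_succ, Nat.cast_succ, ← add_assoc, Gamma_add_one hxn, ih]
    ring

theorem isEquivalent_Gamma_nat_add_one_add {x : ℝ} (hx : ∀ m : ℕ, x ≠ -m) :
    (fun n : ℕ => Gamma (n + 1 + x)) ~[atTop] fun n => n ! * (n : ℝ) ^ x := by
  refine isEquivalent_of_tendsto_one ?_
  have hΓ : Gamma x ≠ 0 := Gamma_ne_zero hx
  have hlim : Tendsto ((fun _ => Gamma x) / GammaSeq x) atTop (𝓝 1) := by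
    simpa [div_self hΓ] using
      (tendsto_const_nhds (x := Gamma x)).div (GammaSeq_tendsto_Gamma x) hΓ
  refine hlim.congr' ?_
  filter_upwards [eventually_ge_atTop 1] with n hn
  have hpos : (0 : ℝ) < n := by exact_mod_cast hn
  have hprod := Gamma_add_nat_eq_mul_prod hx (n + 1)
  simp only [GammaSeq, Pi.div_apply]
  rw [show (n : ℝ) + 1 + x = x + ((n + 1 : ℕ) : ℝ) by push_cast; ring, hprod]
  have := (rpow_pos_of_pos hpos x).ne'
  have := n.factorial_ne_zero
  field_simp

theorem isEquivalent_Gamma_nat_add {x : ℝ} (hx : ∀ m : ℕ, x ≠ -m) :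
    (fun n : ℕ => Gamma (n + x)) ~[atTop] fun n => n ! * (n : ℝ) ^ (x - 1) := by
  have hlin : (fun n : ℕ => (n : ℝ) + x) ~[atTop] fun n => (n : ℝ) :=
    IsEquivalent.refl.add_const_of_norm_tendsto_atTop
      (tendsto_norm_atTop_atTop.comp tendsto_natCast_atTop_atTop)
  refine ((isEquivalent_Gamma_nat_add_one_add hx).div hlin).congr_left ?_ |>.congr_right ?_
  · filter_upwards [eventually_gt_atTop ⌈-x⌉₊] with n hn
    have : (n : ℝ) + x ≠ 0 := by
      have := Nat.lt_of_ceil_lt hn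
      linarith
    simp only [Pi.div_apply]
    rw [add_assoc, add_comm 1 x, ← add_assoc, Gamma_add_one this]
    field_simp
  · filter_upwards [eventually_ge_atTop 1] with n hn
    have hpos : (0 : ℝ) < n := by exact_mod_cast hn
    simp only [Pi.div_apply]
    rw [rpow_sub_one hpos.ne']
    ring

end Real

noncomputable def gaussTerm (α β γ : ℝ) (n : ℕ) : ℝ :=
  Gamma (n + α) * Gamma (n + β) / (n ! * Gamma (n + γ))

section gaussTerm

variable {α β γ : ℝ}

theorem isEquivalent_gaussTerm (hα : ∀ m : ℕ, α ≠ -m) (hβ : ∀ m : ℕ, β ≠ -m)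
    (hγ : ∀ m : ℕ, γ ≠ -m) :
    gaussTerm α β γ ~[atTop] fun n => (n : ℝ) ^ (α + β - γ - 1) := by
  have h := ((isEquivalent_Gamma_nat_add hα).mul (isEquivalent_Gamma_nat_add hβ)).div
    ((IsEquivalent.refl (u := fun n : ℕ => (n ! : ℝ))).mul (isEquivalent_Gamma_nat_add hγ))
  refine h.congr_right ?_
  filter_upwards [eventually_ge_atTop 1] with n hn
  have hpos : (0 : ℝ) < n := by exact_mod_cast hn
  have := n.factorial_ne_zero
  simp only [Pi.div_apply, Pi.mul_apply]
  rw [show α + β - γ - 1 = (α - 1) + (β - 1) - (γ - 1) by ring, rpow_sub hpos (α - 1 + (β - 1)),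
    rpow_add hpos]
  field_simp

theorem summable_gaussTerm (hα : ∀ m : ℕ, α ≠ -m) (hβ : ∀ m : ℕ, β ≠ -m)
    (hγ : ∀ m : ℕ, γ ≠ -m) (h : α + β < γ) : Summable (gaussTerm α β γ) :=
  summable_of_isBigO_nat (summable_nat_rpow.mpr (by linarith))
    (isEquivalent_gaussTerm hα hβ hγ).isBigO

theorem tendsto_natCast_mul_gaussTerm (hα : ∀ m : ℕ, α ≠ -m) (hβ : ∀ m : ℕ, β ≠ -m)
    (hγ : ∀ m : ℕ, γ ≠ -m) (h : α + β < γ) :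
    Tendsto (fun n : ℕ => n * gaussTerm α β γ n) atTop (𝓝 0) := by
  have hO : (fun n : ℕ => n * gaussTerm α β γ n) =O[atTop] fun n => (n : ℝ) ^ (-(γ - α - β)) :=
    ((isBigO_refl _ _).mul (isEquivalent_gaussTerm hα hβ hγ).isBigO).congr_right fun n => by
      rw [← rpow_one_add' (Nat.cast_nonneg n) (by linarith)]
      congr 1
      ring
  exact hO.trans_tendsto ((tendsto_rpow_neg_atTop (by linarith)).comp tendsto_natCast_atTop_atTop)

theorem gaussTerm_contiguous (hα : ∀ m : ℕ, α ≠ -m) (hβ : ∀ m : ℕ, β ≠ -m)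
    (hγ : ∀ m : ℕ, γ ≠ -m) (n : ℕ) :
    (α - γ) * gaussTerm α (β + 1) (γ + 1) n + β * gaussTerm α β γ n =
      (n + 1) * gaussTerm α β γ (n + 1) - n * gaussTerm α β γ n := by
  have hα' : (n : ℝ) + α ≠ 0 := fun h => hα n (by linarith)
  have hβ' : (n : ℝ) + β ≠ 0 := fun h => hβ n (by linarith)
  have hγ' : (n : ℝ) + γ ≠ 0 := fun h => hγ n (by linarith)
  have hΓγ : Gamma (n + γ) ≠ 0 :=
    Gamma_ne_zero fun m h => hγ (m + n) (by push_cast; linarith)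
  have := n.factorial_ne_zero
  simp only [gaussTerm, Nat.cast_succ, Nat.factorial_succ, Nat.cast_mul, add_right_comm _ (1 : ℝ),
    ← add_assoc, Gamma_add_one hα', Gamma_add_one hβ', Gamma_add_one hγ']
  field_simp
  ring

theorem tsum_gaussTerm_contiguous (hα : ∀ m : ℕ, α ≠ -m) (hβ : ∀ m : ℕ, β ≠ -m)
    (hγ : ∀ m : ℕ, γ ≠ -m) (h : α + β < γ) :
    (α - γ) * ∑' n, gaussTerm α (β + 1) (γ + 1) n + β * ∑' n, gaussTerm α β γ n = 0 := by
  have hβ₁ : ∀ m : ℕ, β + 1 ≠ -m := fun m h' => hβ (m + 1) (by push_cast; linarith)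
  have hγ₁ : ∀ m : ℕ, γ + 1 ≠ -m := fun m h' => hγ (m + 1) (by push_cast; linarith)
  have hs₁ := (summable_gaussTerm hα hβ₁ hγ₁ (by linarith)).mul_left (α - γ)
  have hs₂ := (summable_gaussTerm hα hβ hγ h).mul_left β
  have hpartial : (fun N => ∑ n ∈ Finset.range N,
      ((α - γ) * gaussTerm α (β + 1) (γ + 1) n + β * gaussTerm α β γ n)) =
      fun N : ℕ => N * gaussTerm α β γ N := by
    ext N
    simp_rw [gaussTerm_contiguous hα hβ hγ]
    simpa using Finset.sum_range_sub (fun n : ℕ => n * gaussTerm α β γ n) N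
  rw [← tsum_mul_left, ← tsum_mul_left, ← hs₁.tsum_add hs₂]
  refine tendsto_nhds_unique (hs₁.add hs₂).hasSum.tendsto_sum_nat ?_
  rw [hpartial]
  exact tendsto_natCast_mul_gaussTerm hα hβ hγ h

theorem hasSum_gaussTerm_sub_nat (hα : ∀ m : ℤ, α ≠ m) (hβ : ∀ m : ℤ, β ≠ m) (ℓ : ℕ)
    (h : β < -ℓ) : HasSum (gaussTerm α β (α - ℓ)) 0 := by
  have hγ : ∀ m : ℤ, α - ℓ ≠ m := fun m h' => hα (m + ℓ) (by push_cast; linarith)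
  refine (summable_gaussTerm (forall_ne_neg_natCast hα) (forall_ne_neg_natCast hβ)
    (forall_ne_neg_natCast hγ) (by linarith)).hasSum_iff.mpr ?_
  have hβ0 : β ≠ 0 := by exact_mod_cast hβ 0
  induction ℓ generalizing β with
  | zero =>
    have := tsum_gaussTerm_contiguous (forall_ne_neg_natCast hα) (forall_ne_neg_natCast hβ)
      (forall_ne_neg_natCast hα) (by simpa using h)
    simpa [hβ0] using this
  | succ ℓ ih =>
    have hrel := tsum_gaussTerm_contiguous (forall_ne_neg_natCast hα) (forall_ne_neg_natCast hβ)
      (forall_ne_neg_natCast hγ) (by push_cast at h ⊢; linarith)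
    rw [show α - ((ℓ + 1 : ℕ) : ℝ) + 1 = α - ℓ by push_cast; ring,
      ih (fun m h' => hβ (m - 1) (by push_cast; linarith)) (by push_cast at h ⊢; linarith)
        (fun m h' => hα (m + ℓ) (by push_cast; linarith)) (by push_cast at h ⊢; linarith),
      mul_zero, zero_add] at hrel
    exact (mul_eq_zero.mp hrel).resolve_left hβ0

end gaussTerm

theorem Nat.choose_two_mul_succ_mul_factorial (n : ℕ) :
    (2 * (n + 1)).choose (n + 1) * (n + 1)! = 2 ^ (n + 1) * (2 * n + 1)‼ := by
  refine Nat.eq_of_mul_eq_mul_right (n + 1).factorial_pos ?_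
  have hchoose := Nat.choose_mul_factorial_mul_factorial (show n + 1 ≤ 2 * (n + 1) by omega)
  rw [show 2 * (n + 1) - (n + 1) = n + 1 by omega] at hchoose
  rw [hchoose, show 2 * (n + 1) = 2 * n + 1 + 1 by ring, factorial_eq_mul_doubleFactorial,
    show 2 * n + 1 + 1 = 2 * (n + 1) by ring, doubleFactorial_two_mul]
  ring

theorem hupZ_of_nonpos {ℓ : ℤ} (h : ℓ ≤ 0) : hupZ ℓ = 0 := by
  simp [hupZ, not_lt.mpr h]

theorem hupZ_natCast_add_one (n : ℕ) : hupZ (n + 1) = 2 * Gamma (n + 3 / 2) / (√π * n !) := by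
  have hchoose : ((2 * (n + 1)).choose (n + 1) : ℝ) * (n + 1)! = 2 ^ (n + 1) * (2 * n + 1)‼ := by
    exact_mod_cast Nat.choose_two_mul_succ_mul_factorial n
  have hΓ : Gamma (n + 3 / 2) = (2 * n + 1 : ℕ)‼ * √π / 2 ^ (n + 1) := by
    rw [← Gamma_nat_add_one_add_half]; ring_nf
  rw [hupZ, if_pos (by positivity), hΓ, show ((n : ℤ) + 1).toNat = n + 1 by omega]
  have := (n + 1).factorial_ne_zero
  have : √π ≠ 0 := (sqrt_pos.mpr pi_pos).ne'
  rw [Nat.factorial_succ] at hchoose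
  field_simp
  push_cast at hchoose ⊢
  rw [show (4 : ℝ) ^ (n + 1) = 2 ^ (n + 1) * 2 ^ (n + 1) by rw [← mul_pow]; norm_num]
  linear_combination 2 ^ (n + 1) * hchoose

theorem tsum_int_eq_tsum_nat_add_one {M : Type*} [AddCommMonoid M] [TopologicalSpace M]
    {f : ℤ → M} (hf : ∀ k ≤ 0, f k = 0) : ∑' k, f k = ∑' n : ℕ, f (n + 1) := by
  refine (Function.Injective.tsum_eq (g := fun n : ℕ => (n : ℤ) + 1)
    (fun m n h => by simpa using h) fun k hk => ?_).symm
  have : 0 < k := by by_contra h; exact hk (hf k (not_lt.mp h))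
  exact ⟨(k - 1).toNat, by dsimp only; omega⟩

theorem tsum_hupZ_add_mul (f : ℤ → ℝ) (ℓ : ℤ) :
    ∑' k, hupZ (ℓ + k) * f k = ∑' n : ℕ, hupZ (n + 1) * f (n + 1 - ℓ) := by
  have hshift := (Equiv.addLeft ℓ).tsum_eq fun m => hupZ m * f (m - ℓ)
  simp only [Equiv.coe_addLeft, add_sub_cancel_left] at hshift
  rw [hshift]
  exact tsum_int_eq_tsum_nat_add_one fun k hk => by rw [hupZ_of_nonpos hk, zero_mul]

noncomputable def stepLaw (a c : ℝ) (k : ℤ) : ℝ :=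
  if k = 0 then 0 else c * Gamma (3 / 2 - a + k) / Gamma (3 / 2 + k)

theorem hupZ_natCast_add_one_mul_stepLaw (a c : ℝ) (L n : ℕ) :
    hupZ (n + 1) * stepLaw a c (n - L) =
      if n = L then 0 else 2 * c / √π * gaussTerm (3 / 2) (3 / 2 - a - L) (3 / 2 - L) n := by
  rw [hupZ_natCast_add_one, stepLaw]
  by_cases hn : n = L
  · simp [hn]
  · rw [if_neg (by omega), if_neg hn, gaussTerm]
    push_cast
    ring_nf

/-- For the special step law `ν(k) = c·Γ(3/2−a+k)/Γ(3/2+k)·1_{k≠0}` with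
`c = −√π/(2Γ(3/2−a))` and `a ∈ (3/2, 5/2)`, the function `h↑` is `ν`-harmonic on
`ℤ_{>0}`: `Σ_{k∈ℤ} h↑(ℓ+k)·ν(k) = h↑(ℓ)` for every `ℓ > 0`. -/
theorem hup_nu_harmonic (a c : ℝ)
    (ha : 3 / 2 < a) (ha' : a < 5 / 2)
    (hc : c = -Real.sqrt Real.pi / (2 * Real.Gamma (3 / 2 - a)))
    (ν : ℤ → ℝ)
    (hν : ∀ k : ℤ, ν k =
      if k = 0 then 0
      else c * Real.Gamma (3 / 2 - a + (k : ℝ)) / Real.Gamma (3 / 2 + (k : ℝ))) :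
    ∀ ℓ : ℤ, 0 < ℓ → ∑' k : ℤ, hupZ (ℓ + k) * ν k = hupZ ℓ := by
  intro ℓ hℓ
  obtain ⟨L, rfl⟩ : ∃ L : ℕ, ℓ = L + 1 := ⟨(ℓ - 1).toNat, by omega⟩
  obtain rfl : ν = stepLaw a c := funext hν
  have hΓa : Gamma (3 / 2 - a) ≠ 0 := Gamma_ne_zero fun m => by
    exact_mod_cast ne_intCast_of_lt_of_lt (k := -1) (by push_cast; linarith)
      (by push_cast; linarith) (-m)
  set g := gaussTerm (3 / 2) (3 / 2 - a - L) (3 / 2 - L) with hg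
  have hsum : HasSum g 0 :=
    hasSum_gaussTerm_sub_nat (ne_intCast_of_lt_of_lt (k := 1) (by norm_num) (by norm_num))
      (ne_intCast_of_lt_of_lt (k := -1 - L) (by push_cast; linarith) (by push_cast; linarith))
      L (by linarith)
  have hΓ : Gamma (3 / 2) = √π / 2 := by
    convert Gamma_nat_add_one_add_half 0 using 2 <;> norm_num
  rw [tsum_hupZ_add_mul]
  calc ∑' n : ℕ, hupZ (n + 1) * stepLaw a c (n + 1 - (L + 1))
      = ∑' n : ℕ, if n = L then 0 else 2 * c / √π * g n :=
        tsum_congr fun n => by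
          rw [← hupZ_natCast_add_one_mul_stepLaw, add_sub_add_right_eq_sub]
    _ = -(2 * c / √π * g L) := by
        simpa using (hasSum_ite_sub_hasSum (hsum.mul_left (2 * c / √π)) L).tsum_eq
    _ = hupZ (L + 1) := by
        have : √π ≠ 0 := (sqrt_pos.mpr pi_pos).ne'
        rw [hupZ_natCast_add_one, hg, gaussTerm, hc, add_sub_cancel, add_sub_cancel, hΓ]
        generalize Gamma (3 / 2 - a) = G at hΓa ⊢
        field_simp
end
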